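/- arXiv:math/0503114 — 2 statements merged into one kernel-verified Lean document; each statement's English description precedes it below -/
import Mathlib

section
/- For all nonnegative integers m and positive integers n, in \mathbb{Q}(q): ([n][n+1]/q^n)^{m+1} = [2] \sum_{k=0}^{\lfloor m/2 \rfloor} h_{m-2k}(\{1,q\}^{k+1}) \cdot S_{2(m-k)+1,n}(q) \cdot q^{-n(m-k+1)}. -/
open Finset

/-- The `q`-integer `[n] = (1-q^n)/(1-q)` in `ℚ(q)`. -/
noncomputable def qint (n : ℕ) : RatFunc ℚ :=
  (1 - RatFunc.X ^ n) / (1 - RatFunc.X)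

/-- `h_j({1,q}^{k+1})`: the complete homogeneous symmetric polynomial of degree `j`
in `2(k+1)` variables, `k+1` specialized to `q` and `k+1` to `1`. -/
noncomputable def hcomp (j k : ℕ) : RatFunc ℚ :=
  ∑ i ∈ range (j + 1),
    ((k + i).choose k : RatFunc ℚ) * ((j + k - i).choose k : RatFunc ℚ) * RatFunc.X ^ i

/-- `S_{m,n}(q) = ∑_{k=1}^n ([2k]/[2]) [k]^{m-1} q^{((m+1)/2)(n-k)}`. -/
noncomputable def S (m n : ℕ) : RatFunc ℚ :=
  ∑ k ∈ Icc 1 n, (qint (2 * k) / qint 2) * qint k ^ (m - 1) *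
    RatFunc.X ^ ((m + 1) / 2 * (n - k))

/-! Write `yⱼ = [j][j+1]/qʲ` and `tⱼ = [j]²/qʲ`. Then `yⱼ - yⱼ₋₁ = [2j]/qʲ`,
`yⱼ + yⱼ₋₁ = [2] tⱼ` and `yⱼ yⱼ₋₁ = tⱼ (q tⱼ - 1)`, so telescoping gives
`yₙ^(m+1) = ∑ⱼ [2j]/qʲ · hₘ(yⱼ, yⱼ₋₁)`. Since
`(1 - yⱼ z)(1 - yⱼ₋₁ z) = (1 - tⱼ z)(1 - q tⱼ z) - tⱼ z²`, expanding the generating function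
`1 / ((1 - yⱼ z)(1 - yⱼ₋₁ z))` geometrically in `tⱼ z²`, and using that
`1 / ((1 - z)(1 - q z))^(k+1)` generates `h_•({1,q}^{k+1})`, gives
`hₘ(yⱼ, yⱼ₋₁) = ∑ₖ h_{m-2k}({1,q}^{k+1}) tⱼ^(m-k)`.
Summing over `j` then produces `S_{2(m-k)+1,n}`. -/

open PowerSeries

local notation "q" => (RatFunc.X : RatFunc ℚ)

section TwoVariable

variable {R : Type*} [CommRing R]

theorem PowerSeries.coeff_mk_pow_mul_mk_pow (x y : R) (m : ℕ) :
    coeff m (mk (x ^ ·) * mk (y ^ ·)) = ∑ i ∈ range (m + 1), x ^ i * y ^ (m - i) := by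
  simp only [coeff_mul, coeff_mk,
    Nat.sum_antidiagonal_eq_sum_range_succ (fun i j => x ^ i * y ^ j)]

theorem PowerSeries.mk_pow_mul_one_sub (x : R) : mk (x ^ ·) * (1 - C x * X) = 1 := by
  simpa [rescale_mk, rescale_X] using congrArg (rescale x) (mk_one_mul_one_sub_eq_one (S := R))

/-- Expand `1 / ((1 - x X)(1 - y X)) = 1 / ((1 - a X)(1 - b X) - c X²)` geometrically
in `c X²`. -/
theorem sum_pow_mul_pow_eq_sum_coeff_pow {x y a b c : R} (hs : x + y = a + b)
    (hp : x * y = a * b - c) (m : ℕ) :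
    ∑ i ∈ range (m + 1), x ^ i * y ^ (m - i) =
      ∑ k ∈ range (m / 2 + 1),
        c ^ k * coeff (m - 2 * k) ((mk (a ^ ·) * mk (b ^ ·)) ^ (k + 1)) := by
  set u : R⟦X⟧ := mk (a ^ ·) * mk (b ^ ·)
  set w : R⟦X⟧ := C c * X ^ 2
  set E : R⟦X⟧ := mk (x ^ ·) * mk (y ^ ·)
  have hu : u * ((1 - C a * X) * (1 - C b * X)) = 1 := by
    rw [mul_mul_mul_comm, mk_pow_mul_one_sub, mk_pow_mul_one_sub, one_mul]
  have hxy : (1 - C x * X) * (1 - C y * X) = (1 - C a * X) * (1 - C b * X) - w := by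
    have hs' : C x + C y = C a + C b := by simpa using congrArg C hs
    have hp' : C x * C y = C a * C b - C c := by simpa using congrArg C hp
    linear_combination (-X) * hs' + X ^ 2 * hp'
  have hE : E * ((1 - C a * X) * (1 - C b * X) - w) = 1 := by
    rw [← hxy, mul_mul_mul_comm, mk_pow_mul_one_sub, mk_pow_mul_one_sub, one_mul]
  have hgeom : (∑ k ∈ range (m / 2 + 1), w ^ k * u ^ (k + 1)) *
      ((1 - C a * X) * (1 - C b * X) - w) = 1 - (w * u) ^ (m / 2 + 1) := by
    rw [← geom_sum_mul_neg, sum_mul, sum_mul]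
    refine sum_congr rfl fun k _ => ?_
    linear_combination (w * u) ^ k * hu
  have hsum : ∑ k ∈ range (m / 2 + 1), w ^ k * u ^ (k + 1) =
      E - w ^ (m / 2 + 1) * (u ^ (m / 2 + 1) * E) := by
    linear_combination E * hgeom - (∑ k ∈ range (m / 2 + 1), w ^ k * u ^ (k + 1)) * hE
  have hcoeff : ∀ k ≤ m / 2,
      coeff m (w ^ k * u ^ (k + 1)) = c ^ k * coeff (m - 2 * k) (u ^ (k + 1)) := by
    intro k hk
    rw [mul_pow, ← map_pow, ← pow_mul, mul_assoc, coeff_C_mul, coeff_X_pow_mul', if_pos (by omega)]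
  have htail : coeff m (w ^ (m / 2 + 1) * (u ^ (m / 2 + 1) * E)) = 0 := by
    rw [mul_pow, ← map_pow, ← pow_mul, mul_assoc, coeff_C_mul, coeff_X_pow_mul', if_neg (by omega),
      mul_zero]
  rw [← coeff_mk_pow_mul_mk_pow, ← sub_zero (coeff m E), ← htail, ← map_sub, ← hsum, map_sum]
  exact sum_congr rfl fun k hk => hcoeff k (by simpa [Nat.lt_succ_iff] using hk)

end TwoVariable

theorem hcomp_eq_coeff (j k : ℕ) :
    hcomp j k = coeff j ((mk (q ^ ·) * PowerSeries.mk 1) ^ (k + 1)) := by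
  have hq : mk (q ^ ·) = rescale q (PowerSeries.mk 1) := by simp [rescale_mk]
  rw [hq, mul_pow, ← map_pow, mk_one_pow_eq_mk_choose_add, hcomp]
  simp only [coeff_mul, coeff_rescale, coeff_mk, Nat.sum_antidiagonal_eq_sum_range_succ
    (fun i l => q ^ i * ((k + i).choose k : RatFunc ℚ) * ((k + l).choose k : RatFunc ℚ))]
  refine sum_congr rfl fun i hi => ?_
  rw [show j + k - i = k + (j - i) by grind]
  ring

theorem sum_pow_mul_pow_eq_sum_hcomp {x y t : RatFunc ℚ} (hs : x + y = (1 + q) * t)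
    (hp : x * y = t * (q * t - 1)) (m : ℕ) :
    ∑ i ∈ range (m + 1), x ^ i * y ^ (m - i) =
      ∑ k ∈ range (m / 2 + 1), hcomp (m - 2 * k) k * t ^ (m - k) := by
  rw [sum_pow_mul_pow_eq_sum_coeff_pow (a := q * t) (b := t) (c := t) (by rw [hs]; ring)
    (by rw [hp]; ring)]
  refine sum_congr rfl fun k hk => ?_
  have hk : 2 * k ≤ m := by have := mem_range.mp hk; omega
  have hrescale : (mk ((q * t) ^ ·) * mk (t ^ ·)) ^ (k + 1) =
      rescale t ((mk (q ^ ·) * PowerSeries.mk 1) ^ (k + 1)) := by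
    simp only [map_pow, map_mul, rescale_mk, mul_pow, Pi.one_apply, mul_one, mul_comm q t]
  rw [hrescale, coeff_rescale, ← hcomp_eq_coeff, show m - k = k + (m - 2 * k) by omega, pow_add]
  ring

theorem RatFunc.one_sub_X_ne_zero {K : Type*} [Field K] : (1 : RatFunc K) - RatFunc.X ≠ 0 :=
  sub_ne_zero.mpr fun h => by simpa using congrArg RatFunc.intDegree h

theorem qint_two : qint 2 = 1 + q := by
  rw [qint, div_eq_iff RatFunc.one_sub_X_ne_zero]
  ring

theorem qint_two_ne_zero : qint 2 ≠ 0 := by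
  rw [qint_two]
  exact fun h => by simpa using congrArg RatFunc.intDegree (eq_neg_of_add_eq_zero_right h)

noncomputable def qpronic (n : ℕ) : RatFunc ℚ := qint n * qint (n + 1) / q ^ n

theorem qpronic_zero : qpronic 0 = 0 := by simp [qpronic, qint]

section qpronic

variable (j : ℕ)

theorem qpronic_succ_sub : qpronic (j + 1) - qpronic j = qint (2 * (j + 1)) / q ^ (j + 1) := by
  simp only [qpronic, qint]
  field_simp [RatFunc.one_sub_X_ne_zero, RatFunc.X_ne_zero]
  ring

theorem qpronic_succ_add :
    qpronic (j + 1) + qpronic j = (1 + q) * (qint (j + 1) ^ 2 / q ^ (j + 1)) := by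
  simp only [qpronic, qint]
  field_simp [RatFunc.one_sub_X_ne_zero, RatFunc.X_ne_zero]
  ring

theorem qpronic_succ_mul : qpronic (j + 1) * qpronic j =
    qint (j + 1) ^ 2 / q ^ (j + 1) * (q * (qint (j + 1) ^ 2 / q ^ (j + 1)) - 1) := by
  simp only [qpronic, qint]
  field_simp [RatFunc.one_sub_X_ne_zero, RatFunc.X_ne_zero]
  ring

end qpronic

theorem S_two_mul_add_one_mul_zpow (M n : ℕ) :
    S (2 * M + 1) n * q ^ (-((n : ℤ) * (M + 1))) =
      ∑ j ∈ range n, qint (2 * (j + 1)) / qint 2 / q ^ (j + 1) *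
        (qint (j + 1) ^ 2 / q ^ (j + 1)) ^ M := by
  rw [S, ← Ico_add_one_right_eq_Icc, sum_Ico_eq_sum_range, add_tsub_cancel_right, sum_mul]
  refine sum_congr rfl fun j hj => ?_
  have hj : j + 1 ≤ n := by have := mem_range.mp hj; omega
  have hsplit : q ^ (n * (M + 1)) = q ^ ((M + 1) * (n - (j + 1))) * q ^ ((j + 1) * (M + 1)) := by
    obtain ⟨d, rfl⟩ := Nat.exists_eq_add_of_le hj
    rw [← pow_add, add_tsub_cancel_left]
    ring
  rw [add_comm 1 j, show (2 * M + 1 + 1) / 2 = M + 1 by omega, show 2 * M + 1 - 1 = 2 * M by omega,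
    zpow_neg, show (n : ℤ) * (M + 1) = ((n * (M + 1) : ℕ) : ℤ) by push_cast; ring, zpow_natCast,
    hsplit, div_pow, ← pow_mul, ← pow_mul]
  field_simp [RatFunc.X_ne_zero]
  ring

theorem stmt4_general (m n : ℕ) :
    (qint n * qint (n + 1) / RatFunc.X ^ n) ^ (m + 1) =
      qint 2 * ∑ k ∈ range (m / 2 + 1),
          hcomp (m - 2 * k) k * S (2 * (m - k) + 1) n *
            RatFunc.X ^ (-((n : ℤ) * ((m : ℤ) - k + 1))) := by
  have hRHS : ∀ k ∈ range (m / 2 + 1), hcomp (m - 2 * k) k * S (2 * (m - k) + 1) n *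
      q ^ (-((n : ℤ) * ((m : ℤ) - k + 1))) = ∑ j ∈ range n, qint (2 * (j + 1)) / qint 2 /
        q ^ (j + 1) * (hcomp (m - 2 * k) k * (qint (j + 1) ^ 2 / q ^ (j + 1)) ^ (m - k)) := by
    intro k hk
    have hk : k ≤ m := by have := mem_range.mp hk; omega
    rw [mul_assoc, show (m : ℤ) - k = ((m - k : ℕ) : ℤ) by push_cast [hk]; rfl,
      S_two_mul_add_one_mul_zpow, mul_sum]
    exact sum_congr rfl fun j _ => by ring
  calc qpronic n ^ (m + 1)
      = ∑ j ∈ range n, (qpronic (j + 1) ^ (m + 1) - qpronic j ^ (m + 1)) := by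
        rw [sum_range_sub (qpronic · ^ (m + 1)), qpronic_zero, zero_pow m.succ_ne_zero, sub_zero]
    _ = ∑ j ∈ range n, qint (2 * (j + 1)) / q ^ (j + 1) *
          ∑ k ∈ range (m / 2 + 1),
            hcomp (m - 2 * k) k * (qint (j + 1) ^ 2 / q ^ (j + 1)) ^ (m - k) := by
        refine sum_congr rfl fun j _ => ?_
        rw [← sum_pow_mul_pow_eq_sum_hcomp (qpronic_succ_add j) (qpronic_succ_mul j),
          ← qpronic_succ_sub, mul_comm, ← geom_sum₂_mul, add_tsub_cancel_right]
    _ = _ := by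
        rw [sum_congr rfl hRHS, sum_comm, mul_sum]
        refine sum_congr rfl fun j _ => ?_
        rw [mul_sum, mul_sum]
        refine sum_congr rfl fun k _ => ?_
        field_simp [qint_two_ne_zero]

theorem stmt4 (m n : ℕ) (hn : 1 ≤ n) :
    (qint n * qint (n + 1) / RatFunc.X ^ n) ^ (m + 1) =
      qint 2 * ∑ k ∈ range (m / 2 + 1),
          hcomp (m - 2 * k) k * S (2 * (m - k) + 1) n *
            RatFunc.X ^ (-((n : ℤ) * ((m : ℤ) - k + 1))) :=
  stmt4_general m n
end

section
/- For nonnegative integers k \le m and r, the hypergeometric-type sum \sum_{i} \binom{k+i}{k}\binom{m-k-i}{k}\binom{2k+1}{r-i}(-1)^{r-i} (over all i with 0 \le i \le m-2k) equals (-1)^r \binom{m-k}{k}\binom{2k+1}{r} \cdot {}_3F_2(-r, 1+k, 2k-m; k-m, 2+2k-r; 1), and by the Pfaff–Saalschütz summation this equals (-1)^{r+m}\binom{m+1}{r}\binom{r-k-1}{m-2k}. -/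
open Finset

/-!
Creative telescoping in `m` (Zeilberger's algorithm). Writing `F m i` for the summand and
`S m = ∑ i, F m i`, the certificate `G i = i (r - 2k - 1 - i) F (m + 1) i` satisfies
`(m + 2 - r)(m - 2k + 1) F (m + 1) i + (m + 2)(r + k - m - 1) F m i = G (i + 1) - G i`,
which after clearing the hypergeometric term ratios is a polynomial identity. Summing over `i`
gives a first-order recurrence for `S`, which the closed form satisfies as well, and the two agree
at `m = 2k`. The recurrence determines `S (m + 1)` from `S m` as long as `r ≤ m + 1`; for `r > m`
the sum reduces to its last term and is compared with the closed form directly.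
-/

/-- Generalized binomial coefficient for integer arguments:
`ichoose a b = a (a-1) ⋯ (a-b+1) / b!` for `b ≥ 0`, and `0` for `b < 0`. -/
def ichoose (a b : ℤ) : ℤ :=
  if b < 0 then 0
  else if 0 ≤ a then (a.toNat.choose b.toNat : ℤ)
  else (-1) ^ b.toNat * ((b - 1 - a).toNat.choose b.toNat : ℤ)

lemma ichoose_of_neg {a b : ℤ} (h : b < 0) : ichoose a b = 0 := by
  simp [ichoose, h]

lemma ichoose_zero_right (a : ℤ) : ichoose a 0 = 1 := by
  simp [ichoose]

lemma ichoose_natCast (n b : ℕ) : ichoose n b = n.choose b := by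
  simp [ichoose]

lemma ichoose_eq_zero_of_lt {a b : ℤ} (ha : 0 ≤ a) (hab : a < b) : ichoose a b = 0 := by
  lift a to ℕ using ha
  lift b to ℕ using by omega
  rw [ichoose_natCast, Nat.choose_eq_zero_of_lt (by omega), Nat.cast_zero]

lemma ichoose_eq_ringChoose (a : ℤ) (b : ℕ) : ichoose a b = Ring.choose a b := by
  rcases le_or_gt 0 a with ha | ha
  · lift a to ℕ using ha
    rw [ichoose_natCast, Ring.choose_natCast]
  · obtain ⟨n, rfl⟩ : ∃ n : ℕ, a = -n := ⟨(-a).toNat, by omega⟩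
    rw [Ring.choose_neg, show (n : ℤ) + b - 1 = (n + b - 1 : ℕ) by omega, Ring.choose_natCast,
      Int.negOnePow_def, Units.smul_def]
    simp [ichoose, show n ≠ 0 by omega, show (b : ℤ) - 1 + n = (n + b - 1 : ℕ) by omega]

lemma succ_mul_ichoose_succ (a : ℤ) (b : ℕ) :
    (b + 1) * ichoose a (b + 1) = (a - b) * ichoose a b := by
  have h := Ring.choose_smul_choose a (show b ≤ b + 1 by omega)
  simp only [Nat.choose_succ_self_right, nsmul_eq_mul, Nat.add_sub_cancel_left,
    Ring.choose_one_right] at h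
  rw [← Nat.cast_one, ← Nat.cast_add, ichoose_eq_ringChoose, ichoose_eq_ringChoose]
  push_cast at h ⊢
  linear_combination h

lemma sub_mul_ichoose (a : ℤ) (b : ℕ) : (a - b) * ichoose a b = a * ichoose (a - 1) b := by
  have h := Ring.choose_smul_choose a (show 1 ≤ b + 1 by omega)
  simp only [Nat.choose_one_right, nsmul_eq_mul, Nat.add_sub_cancel, Ring.choose_one_right] at h
  rw [← succ_mul_ichoose_succ, ← Nat.cast_one, ← Nat.cast_add, ichoose_eq_ringChoose,
    ichoose_eq_ringChoose]
  push_cast at h ⊢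
  linear_combination h

lemma mul_ichoose (a c : ℤ) : c * ichoose a c = (a - c + 1) * ichoose a (c - 1) := by
  rcases lt_trichotomy c 0 with hc | rfl | hc
  · rw [ichoose_of_neg hc, ichoose_of_neg (by omega)]; ring
  · rw [ichoose_of_neg (show (0 : ℤ) - 1 < 0 by norm_num)]; ring
  · obtain ⟨b, rfl⟩ : ∃ b : ℕ, c = b + 1 := ⟨(c - 1).toNat, by omega⟩
    rw [succ_mul_ichoose_succ, add_sub_cancel_right]
    ring

def saalschutzTerm (k r m i : ℕ) : ℤ :=
  ichoose (k + i) k * ichoose ((m : ℤ) - k - i) k * ichoose (2 * k + 1) ((r : ℤ) - i) *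
    (-1) ^ (r + i)

lemma saalschutzTerm_telescope (k r m i : ℕ) :
    ((m : ℤ) + 2 - r) * (m - 2 * k + 1) * saalschutzTerm k r (m + 1) i
        + ((m : ℤ) + 2) * (r + k - m - 1) * saalschutzTerm k r m i
      = ((i + 1 : ℕ) : ℤ) * ((r : ℤ) - 2 * k - 1 - (i + 1 : ℕ)) *
            saalschutzTerm k r (m + 1) (i + 1)
        - i * ((r : ℤ) - 2 * k - 1 - i) * saalschutzTerm k r (m + 1) i := by
  simp only [saalschutzTerm]
  push_cast
  have hA := sub_mul_ichoose ((k : ℤ) + i + 1) k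
  have hB := sub_mul_ichoose ((m : ℤ) + 1 - k - i) k
  have hC := mul_ichoose (2 * k + 1) ((r : ℤ) - i)
  rw [add_sub_cancel_right] at hA
  rw [show (m : ℤ) + 1 - k - i - 1 = m - k - i by ring] at hB
  rw [show (m : ℤ) + 1 - k - (i + 1) = m - k - i by ring,
    show (r : ℤ) - (i + 1) = r - i - 1 by ring, ← add_assoc,
    show r + (i + 1) = r + i + 1 from rfl, pow_succ]
  linear_combination
    (-(2 * k + 2 - r + i) * ichoose ((m : ℤ) - k - i) k *
        ichoose (2 * k + 1) ((r : ℤ) - i - 1) * (-1) ^ (r + i)) * hA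
      + ((m + 2 - r + i) * ichoose ((k : ℤ) + i) k * ichoose (2 * k + 1) ((r : ℤ) - i) *
        (-1) ^ (r + i)) * hB
      + ((k + i + 1) * ichoose ((k : ℤ) + i) k * ichoose ((m : ℤ) - k - i) k *
        (-1) ^ (r + i)) * hC

lemma saalschutzTerm_eq_zero_of_lt {k r m i : ℕ} (h : r < i) : saalschutzTerm k r m i = 0 := by
  rw [saalschutzTerm, ichoose_of_neg (by omega : (r : ℤ) - i < 0)]
  ring

lemma saalschutzTerm_eq_zero_of_lt_sub {k r m i : ℕ} (h : 2 * k + 1 + i < r) :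
    saalschutzTerm k r m i = 0 := by
  rw [saalschutzTerm, ichoose_eq_zero_of_lt (by positivity) (by omega : 2 * (k : ℤ) + 1 < r - i)]
  ring

lemma saalschutzTerm_eq_zero_of_add_eq {k r m i : ℕ} (hk : 0 < k) (h : 2 * k + i = m + 1) :
    saalschutzTerm k r m i = 0 := by
  rw [saalschutzTerm, ichoose_eq_zero_of_lt (by omega : (0 : ℤ) ≤ m - k - i) (by omega)]
  ring

def saalschutzSum (k r m : ℕ) : ℤ :=
  ∑ i ∈ range (m - 2 * k + 1), saalschutzTerm k r m i

def saalschutzClosedForm (k r m : ℕ) : ℤ :=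
  (-1) ^ (r + m) * ((m + 1).choose r : ℤ) * ichoose ((r : ℤ) - k - 1) ((m : ℤ) - 2 * k)

lemma saalschutzSum_recurrence {k r m : ℕ} (hm : 2 * k ≤ m) (hr : r ≤ m + 1) :
    ((m : ℤ) + 2 - r) * (m - 2 * k + 1) * saalschutzSum k r (m + 1)
      + ((m : ℤ) + 2) * (r + k - m - 1) * saalschutzSum k r m = 0 := by
  have htel := sum_range_sub
    (fun j : ℕ => (j : ℤ) * ((r : ℤ) - 2 * k - 1 - j) * saalschutzTerm k r (m + 1) j)
    (m - 2 * k + 2)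
  -- The terms past the summation range die through the factor `C(k - 1, k) = 0`, except for
  -- `k = 0`, where that factor is `C(-1, 0) = 1` and `C(1, r - i)` has to vanish instead.
  have hlast : saalschutzTerm k r (m + 1) (m - 2 * k + 2) = 0 := by
    rcases k.eq_zero_or_pos with rfl | hk
    · exact saalschutzTerm_eq_zero_of_lt (by omega)
    · exact saalschutzTerm_eq_zero_of_add_eq hk (by omega)
  have hextra : ((m : ℤ) + 2) * (r + k - m - 1) * saalschutzTerm k r m (m - 2 * k + 1) = 0 := by
    rcases k.eq_zero_or_pos with rfl | hk
    · rcases hr.lt_or_eq with hr | rfl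
      · rw [saalschutzTerm_eq_zero_of_lt (by omega), mul_zero]
      · push_cast; ring
    · rw [saalschutzTerm_eq_zero_of_add_eq hk (by omega), mul_zero]
  simp only [← saalschutzTerm_telescope, sum_add_distrib, ← mul_sum, CharP.cast_eq_zero,
    zero_mul, sub_zero, hlast, mul_zero] at htel
  rw [sum_range_succ (saalschutzTerm k r m)] at htel
  rw [saalschutzSum, saalschutzSum, show m + 1 - 2 * k + 1 = m - 2 * k + 2 by omega]
  linear_combination htel - hextra

lemma saalschutzClosedForm_recurrence (k r m : ℕ) :
    ((m : ℤ) + 2 - r) * (m - 2 * k + 1) * saalschutzClosedForm k r (m + 1)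
      + ((m : ℤ) + 2) * (r + k - m - 1) * saalschutzClosedForm k r m = 0 := by
  have hm := sub_mul_ichoose ((m + 2 : ℕ) : ℤ) r
  rw [ichoose_natCast, show ((m + 2 : ℕ) : ℤ) - 1 = (m + 1 : ℕ) by push_cast; ring,
    ichoose_natCast] at hm
  have hr := mul_ichoose ((r : ℤ) - k - 1) ((m : ℤ) - 2 * k + 1)
  rw [add_sub_cancel_right] at hr
  simp only [saalschutzClosedForm]
  push_cast at hm ⊢
  rw [show (m : ℤ) + 1 - 2 * k = m - 2 * k + 1 by ring, show r + (m + 1) = r + m + 1 from rfl,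
    pow_succ]
  linear_combination
    (-(-1) ^ (r + m) * ((m : ℤ) - 2 * k + 1) *
        ichoose ((r : ℤ) - k - 1) ((m : ℤ) - 2 * k + 1)) * hm
      - ((-1) ^ (r + m) * ((m : ℤ) + 2) * ((m + 1).choose r : ℤ)) * hr

lemma saalschutzSum_two_mul (k r : ℕ) :
    saalschutzSum k r (2 * k) = saalschutzClosedForm k r (2 * k) := by
  rw [saalschutzSum, saalschutzClosedForm, Nat.sub_self, zero_add, sum_range_one, saalschutzTerm]
  have h := ichoose_natCast (2 * k + 1) r
  push_cast at h
  simp only [CharP.cast_eq_zero, add_zero, sub_zero, sub_self, Nat.cast_mul, Nat.cast_ofNat,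
    show 2 * (k : ℤ) - k = k by ring, ichoose_natCast, Nat.choose_self, Nat.cast_one, h,
    ichoose_zero_right, pow_add, pow_mul, even_two, Even.neg_pow, one_pow]
  ring

lemma saalschutzSum_of_lt {k r m : ℕ} (hm : 2 * k ≤ m) (hr : m < r) :
    saalschutzSum k r m = saalschutzClosedForm k r m := by
  obtain ⟨n, rfl⟩ := Nat.exists_eq_add_of_le hm
  obtain ⟨s, rfl⟩ := Nat.exists_eq_add_of_lt hr
  rw [saalschutzSum, Nat.add_sub_cancel_left, sum_eq_single_of_mem n (self_mem_range_succ n)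
    fun i hi _ => saalschutzTerm_eq_zero_of_lt_sub (by simp at hi; omega)]
  simp only [saalschutzTerm, saalschutzClosedForm]
  push_cast
  rw [show (2 * k + n : ℤ) - k - n = k by ring, ichoose_natCast, Nat.choose_self,
    show (2 * k + n + s + 1 : ℤ) - n = 2 * k + 1 + s by ring,
    show (2 * k + n + s + 1 : ℤ) - k - 1 = k + n + s by ring,
    show (2 * k + n : ℤ) - 2 * k = n by ring]
  rcases s with _ | s
  · have hA : ichoose ((k : ℤ) + n) k = ichoose ((k : ℤ) + n) n := by
      rw [← Nat.cast_add, ichoose_natCast, ichoose_natCast, Nat.choose_symm_add]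
    have hC : ichoose (2 * (k : ℤ) + 1) (2 * k + 1) = 1 := by
      rw [show 2 * (k : ℤ) + 1 = (2 * k + 1 : ℕ) by push_cast; ring, ichoose_natCast,
        Nat.choose_self, Nat.cast_one]
    rw [Odd.neg_one_pow ⟨k + n, by ring⟩, Odd.neg_one_pow ⟨2 * k + n, by ring⟩]
    simp only [Nat.cast_zero, add_zero, hA, hC, Nat.choose_self, Nat.cast_one]
    ring
  · rw [ichoose_eq_zero_of_lt (by positivity)
      (by omega : 2 * (k : ℤ) + 1 < 2 * k + 1 + ((s + 1 : ℕ) : ℤ)),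
      Nat.choose_eq_zero_of_lt (by omega : 2 * k + n + 1 < 2 * k + n + (s + 1) + 1)]
    ring

theorem saalschutzSum_eq_closedForm {k r m : ℕ} (hm : 2 * k ≤ m) :
    saalschutzSum k r m = saalschutzClosedForm k r m := by
  induction m, hm using Nat.le_induction with
  | base => exact saalschutzSum_two_mul k r
  | succ m hm ih =>
    rcases le_or_gt r (m + 1) with hr | hr
    · have hlead : ((m : ℤ) + 2 - r) * (m - 2 * k + 1) ≠ 0 := mul_ne_zero (by omega) (by omega)
      refine mul_left_cancel₀ hlead ?_
      linear_combination saalschutzSum_recurrence hm hr - saalschutzClosedForm_recurrence k r m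
        - ((m : ℤ) + 2) * (r + k - m - 1) * ih
    · exact saalschutzSum_of_lt (by omega) hr

theorem stmt12_general (k m r : ℕ) (h : 2 * k ≤ m) :
    ∑ i ∈ range (m - 2 * k + 1),
        ((k + i).choose k : ℤ) * ((m - k - i).choose k : ℤ) *
          ichoose (2 * k + 1) ((r : ℤ) - i) * (-1 : ℤ) ^ (r + i) =
      (-1 : ℤ) ^ (r + m) * ((m + 1).choose r : ℤ) *
        ichoose ((r : ℤ) - k - 1) ((m : ℤ) - 2 * k) := by
  refine (sum_congr rfl fun i hi => ?_).trans (saalschutzSum_eq_closedForm h)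
  rw [mem_range] at hi
  rw [saalschutzTerm, ← ichoose_natCast, ← ichoose_natCast, Nat.cast_sub (by omega),
    Nat.cast_sub (by omega)]
  push_cast
  rfl

/-- The Pfaff–Saalschütz evaluation of
`∑_i (-1)^{r-i} C(k+i,k) C(m-k-i,k) C(2k+1,r-i)` in closed form. -/
theorem stmt12 (k m r : ℕ) (hkm : k ≤ m) (h : 2 * k ≤ m) :
    ∑ i ∈ range (m - 2 * k + 1),
        ((k + i).choose k : ℤ) * ((m - k - i).choose k : ℤ) *
          ichoose (2 * k + 1) ((r : ℤ) - i) * (-1 : ℤ) ^ (r + i) =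
      (-1 : ℤ) ^ (r + m) * ((m + 1).choose r : ℤ) *
        ichoose ((r : ℤ) - k - 1) ((m : ℤ) - 2 * k) :=
  stmt12_general k m r h
end
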